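/- arXiv:1011.2817 — 5 statements merged into one kernel-verified Lean document; each statement's English description precedes it below -/
import Mathlib

section
/- Let p be a positive differentiable real-valued function on a domain Ω ⊆ ℝ². Real-valued differentiable functions φ and ψ satisfy the p-analytic system ∂φ/∂x = (1/p²)∂ψ/∂y and ∂φ/∂y = −(1/p²)∂ψ/∂x if and only if the complex-valued function W = pφ + (i/p)ψ satisfies the Vekua equation ∂_z̄ W − ((∂_z̄ p)/p)·conj(W) = 0, where ∂_z̄ = ∂/∂x + i∂/∂y. -/
/-- `∂_z̄ = ∂/∂x + i ∂/∂y` (without the factor 1/2). -/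
noncomputable def dzbar (F : ℝ → ℝ → ℂ) (x y : ℝ) : ℂ :=
  deriv (fun t => F t y) x + Complex.I * deriv (fun t => F x t) y

/-- Real-valued differentiable `φ, ψ` satisfy the `p`-analytic system
`∂φ/∂x = (1/p²) ∂ψ/∂y`, `∂φ/∂y = −(1/p²) ∂ψ/∂x` iff `W = pφ + (i/p)ψ`
satisfies the Vekua equation `∂_z̄ W − ((∂_z̄ p)/p)·conj W = 0`. -/
theorem p_analytic_system_iff_vekua
    (p φ ψ : ℝ → ℝ → ℝ) (hp : ∀ x y, 0 < p x y)
    (hpx : ∀ x y, DifferentiableAt ℝ (fun t => p t y) x)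
    (hpy : ∀ x y, DifferentiableAt ℝ (fun t => p x t) y)
    (hφx : ∀ x y, DifferentiableAt ℝ (fun t => φ t y) x)
    (hφy : ∀ x y, DifferentiableAt ℝ (fun t => φ x t) y)
    (hψx : ∀ x y, DifferentiableAt ℝ (fun t => ψ t y) x)
    (hψy : ∀ x y, DifferentiableAt ℝ (fun t => ψ x t) y)
    (P W : ℝ → ℝ → ℂ)
    (hP : P = fun x y => ((p x y : ℝ) : ℂ))
    (hW : W = fun x y => (p x y : ℂ) * (φ x y : ℂ) +
        (Complex.I / (p x y : ℂ)) * (ψ x y : ℂ)) :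
    ∀ x y,
      ((deriv (fun t => φ t y) x = (1 / (p x y) ^ 2) * deriv (fun t => ψ x t) y ∧
        deriv (fun t => φ x t) y = -(1 / (p x y) ^ 2) * deriv (fun t => ψ t y) x)
      ↔ dzbar W x y - (dzbar P x y / P x y) * (starRingEnd ℂ) (W x y) = 0) := by
  subst hP hW
  intro x y
  have hp0 : p x y ≠ 0 := (hp x y).ne'
  have hpC : ((p x y : ℝ) : ℂ) ≠ 0 := Complex.ofReal_ne_zero.mpr hp0
  set a : ℝ := deriv (fun t => p t y) x with ha
  set b : ℝ := deriv (fun t => p x t) y with hb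
  set fx : ℝ := deriv (fun t => φ t y) x with hfx
  set fy : ℝ := deriv (fun t => φ x t) y with hfy
  set gx : ℝ := deriv (fun t => ψ t y) x with hgx
  set gy : ℝ := deriv (fun t => ψ x t) y with hgy
  have hPx : HasDerivAt (fun t => ((p t y : ℝ) : ℂ)) (a : ℂ) x :=
    ((hpx x y).hasDerivAt).ofReal_comp
  have hPy : HasDerivAt (fun t => ((p x t : ℝ) : ℂ)) (b : ℂ) y :=
    ((hpy x y).hasDerivAt).ofReal_comp
  have hFx : HasDerivAt (fun t => ((φ t y : ℝ) : ℂ)) (fx : ℂ) x :=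
    ((hφx x y).hasDerivAt).ofReal_comp
  have hFy : HasDerivAt (fun t => ((φ x t : ℝ) : ℂ)) (fy : ℂ) y :=
    ((hφy x y).hasDerivAt).ofReal_comp
  have hGx : HasDerivAt (fun t => ((ψ t y : ℝ) : ℂ)) (gx : ℂ) x :=
    ((hψx x y).hasDerivAt).ofReal_comp
  have hGy : HasDerivAt (fun t => ((ψ x t : ℝ) : ℂ)) (gy : ℂ) y :=
    ((hψy x y).hasDerivAt).ofReal_comp
  have hWx : HasDerivAt (fun t => (p t y : ℂ) * (φ t y : ℂ) +
      (Complex.I / (p t y : ℂ)) * (ψ t y : ℂ))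
      (((a : ℂ) * (φ x y : ℂ) + (p x y : ℂ) * (fx : ℂ)) +
        (((0 * (p x y : ℂ) - Complex.I * (a : ℂ)) / (p x y : ℂ) ^ 2) * (ψ x y : ℂ) +
          (Complex.I / (p x y : ℂ)) * (gx : ℂ))) x :=
    (hPx.mul hFx).add (((hasDerivAt_const x Complex.I).div hPx hpC).mul hGx)
  have hWy : HasDerivAt (fun t => (p x t : ℂ) * (φ x t : ℂ) +
      (Complex.I / (p x t : ℂ)) * (ψ x t : ℂ))
      (((b : ℂ) * (φ x y : ℂ) + (p x y : ℂ) * (fy : ℂ)) +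
        (((0 * (p x y : ℂ) - Complex.I * (b : ℂ)) / (p x y : ℂ) ^ 2) * (ψ x y : ℂ) +
          (Complex.I / (p x y : ℂ)) * (gy : ℂ))) y :=
    (hPy.mul hFy).add (((hasDerivAt_const y Complex.I).div hPy hpC).mul hGy)
  have hconj : (starRingEnd ℂ) ((p x y : ℂ) * (φ x y : ℂ) +
      (Complex.I / (p x y : ℂ)) * (ψ x y : ℂ)) =
      (p x y : ℂ) * (φ x y : ℂ) - (Complex.I / (p x y : ℂ)) * (ψ x y : ℂ) := by
    simp [map_add, map_mul, map_div₀, Complex.conj_ofReal, Complex.conj_I]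
    ring
  have hkey : dzbar (fun x y => (p x y : ℂ) * (φ x y : ℂ) +
        (Complex.I / (p x y : ℂ)) * (ψ x y : ℂ)) x y -
      (dzbar (fun x y => ((p x y : ℝ) : ℂ)) x y / ((p x y : ℝ) : ℂ)) *
        (starRingEnd ℂ) ((p x y : ℂ) * (φ x y : ℂ) + (Complex.I / (p x y : ℂ)) * (ψ x y : ℂ)) =
      ((p x y * fx - gy / p x y : ℝ) : ℂ) + ((p x y * fy + gx / p x y : ℝ) : ℂ) * Complex.I := by
    rw [hconj]
    simp only [dzbar, hWx.deriv, hWy.deriv, hPx.deriv, hPy.deriv]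
    have hI : Complex.I * Complex.I = -1 := Complex.I_mul_I
    push_cast
    field_simp
    ring_nf
    rw [Complex.I_sq]
    ring
  rw [hkey]
  have himre : (((p x y * fx - gy / p x y : ℝ) : ℂ) +
      ((p x y * fy + gx / p x y : ℝ) : ℂ) * Complex.I = 0) ↔
      (p x y * fx - gy / p x y = 0 ∧ p x y * fy + gx / p x y = 0) := by
    rw [Complex.ext_iff]
    simp
  rw [himre]
  constructor
  · rintro ⟨h1, h2⟩
    constructor
    · rw [h1]; field_simp; ring
    · rw [h2]; field_simp; ring
  · rintro ⟨h1, h2⟩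
    have hp2 : (p x y) ^ 2 ≠ 0 := pow_ne_zero 2 hp0
    constructor
    · field_simp at h1 ⊢
      nlinarith [h1]
    · field_simp at h2 ⊢
      nlinarith [h2]
end

section
/- Let u be a twice continuously differentiable real-valued function and σ a positive twice differentiable function on a domain of ℝ³. Define the purely vectorial quaternion E⃗ = −√σ·grad u and σ⃗ = (grad √σ)/√σ. Then div(σ grad u) = 0 if and only if (D + M^σ⃗)E⃗ = 0, where M^σ⃗ denotes right multiplication by σ⃗ and D is the Moisil-Theodoresco operator. -/
open Quaternion

def e1 : Quaternion ℝ := ⟨0, 1, 0, 0⟩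
def e2 : Quaternion ℝ := ⟨0, 0, 1, 0⟩
def e3 : Quaternion ℝ := ⟨0, 0, 0, 1⟩

/-- The Moisil-Theodoresco operator `D = e₁∂₁ + e₂∂₂ + e₃∂₃` (left multiplication). -/
noncomputable def MT (Q : ℝ → ℝ → ℝ → Quaternion ℝ) (x₁ x₂ x₃ : ℝ) : Quaternion ℝ :=
  e1 * deriv (fun t => Q t x₂ x₃) x₁ + e2 * deriv (fun t => Q x₁ t x₃) x₂ +
    e3 * deriv (fun t => Q x₁ x₂ t) x₃

noncomputable def pd1 (f : ℝ → ℝ → ℝ → ℝ) (x₁ x₂ x₃ : ℝ) : ℝ := deriv (fun t => f t x₂ x₃) x₁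
noncomputable def pd2 (f : ℝ → ℝ → ℝ → ℝ) (x₁ x₂ x₃ : ℝ) : ℝ := deriv (fun t => f x₁ t x₃) x₂
noncomputable def pd3 (f : ℝ → ℝ → ℝ → ℝ) (x₁ x₂ x₃ : ℝ) : ℝ := deriv (fun t => f x₁ x₂ t) x₃

/-! Put `w = √σ`, so that `E⃗ = -w grad u` and `σ⃗ = w⁻¹ grad w`. The Leibniz rule
`D(w Q) = (grad w) Q + w D Q` together with `D grad u = -Δu` (the rotational part cancels by
Schwarz's theorem) gives `D E⃗ + E⃗ σ⃗ = -(grad w grad u + grad u grad w) + w Δu`, and since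
`p q + q p = -2 ⟨p, q⟩` for purely vectorial quaternions this is the real number
`2 ⟨grad w, grad u⟩ + w Δu`. On the other side `grad σ = 2 w grad w`, so
`div(σ grad u) = w (2 ⟨grad w, grad u⟩ + w Δu)`, and `w > 0`. -/

open Function

section SecondDerivatives

variable {E F : Type*} [NormedAddCommGroup E] [NormedSpace ℝ E] [NormedAddCommGroup F]
  [NormedSpace ℝ F] {f : E → F}

theorem ContDiff.differentiable_fderiv_apply (hf : ContDiff ℝ 2 f) (v : E) :
    Differentiable ℝ fun p => fderiv ℝ f p v :=
  ((hf.fderiv_right (m := 1) le_rfl).clm_apply contDiff_const).differentiable one_ne_zero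

theorem fderiv_fderiv_apply_comm (hf : ContDiff ℝ 2 f) (x v w : E) :
    fderiv ℝ (fun p => fderiv ℝ f p v) x w = fderiv ℝ (fun p => fderiv ℝ f p w) x v := by
  have hf' : Differentiable ℝ (fderiv ℝ f) :=
    (hf.fderiv_right (m := 1) le_rfl).differentiable one_ne_zero
  rw [fderiv_clm_apply (hf' x) (differentiableAt_const v),
    fderiv_clm_apply (hf' x) (differentiableAt_const w)]
  simpa using hf.contDiffAt.isSymmSndFDerivAt (by simp) w v

end SecondDerivatives

section Slices

variable {F : Type*} [NormedAddCommGroup F] [NormedSpace ℝ F] {f : ℝ → ℝ → ℝ → F} {a b c : ℝ}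

theorem hasDerivAt_slice₁ (h : DifferentiableAt ℝ ↿f (a, b, c)) :
    HasDerivAt (fun t => f t b c) (fderiv ℝ ↿f (a, b, c) (1, 0, 0)) a :=
  (h.hasFDerivAt.comp_hasDerivAt a
    ((hasDerivAt_id a).prodMk ((hasDerivAt_const a b).prodMk (hasDerivAt_const a c))) :)

theorem hasDerivAt_slice₂ (h : DifferentiableAt ℝ ↿f (a, b, c)) :
    HasDerivAt (fun t => f a t c) (fderiv ℝ ↿f (a, b, c) (0, 1, 0)) b :=
  (h.hasFDerivAt.comp_hasDerivAt b
    ((hasDerivAt_const b a).prodMk ((hasDerivAt_id b).prodMk (hasDerivAt_const b c))) :)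

theorem hasDerivAt_slice₃ (h : DifferentiableAt ℝ ↿f (a, b, c)) :
    HasDerivAt (fun t => f a b t) (fderiv ℝ ↿f (a, b, c) (0, 0, 1)) c :=
  (h.hasFDerivAt.comp_hasDerivAt c
    ((hasDerivAt_const c a).prodMk ((hasDerivAt_const c b).prodMk (hasDerivAt_id c))) :)

end Slices

section Partials

variable {f : ℝ → ℝ → ℝ → ℝ} {a b c : ℝ}

theorem pd1_eq_fderiv (h : DifferentiableAt ℝ ↿f (a, b, c)) :
    pd1 f a b c = fderiv ℝ ↿f (a, b, c) (1, 0, 0) :=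
  (hasDerivAt_slice₁ h).deriv

theorem pd2_eq_fderiv (h : DifferentiableAt ℝ ↿f (a, b, c)) :
    pd2 f a b c = fderiv ℝ ↿f (a, b, c) (0, 1, 0) :=
  (hasDerivAt_slice₂ h).deriv

theorem pd3_eq_fderiv (h : DifferentiableAt ℝ ↿f (a, b, c)) :
    pd3 f a b c = fderiv ℝ ↿f (a, b, c) (0, 0, 1) :=
  (hasDerivAt_slice₃ h).deriv

theorem hasDerivAt_pd1 (h : DifferentiableAt ℝ ↿f (a, b, c)) :
    HasDerivAt (fun t => f t b c) (pd1 f a b c) a :=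
  (pd1_eq_fderiv h) ▸ hasDerivAt_slice₁ h

theorem hasDerivAt_pd2 (h : DifferentiableAt ℝ ↿f (a, b, c)) :
    HasDerivAt (fun t => f a t c) (pd2 f a b c) b :=
  (pd2_eq_fderiv h) ▸ hasDerivAt_slice₂ h

theorem hasDerivAt_pd3 (h : DifferentiableAt ℝ ↿f (a, b, c)) :
    HasDerivAt (fun t => f a b t) (pd3 f a b c) c :=
  (pd3_eq_fderiv h) ▸ hasDerivAt_slice₃ h

theorem uncurry_pd1 (h : Differentiable ℝ ↿f) : ↿(pd1 f) = fun p => fderiv ℝ ↿f p (1, 0, 0) :=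
  funext fun _ => pd1_eq_fderiv (h _)

theorem uncurry_pd2 (h : Differentiable ℝ ↿f) : ↿(pd2 f) = fun p => fderiv ℝ ↿f p (0, 1, 0) :=
  funext fun _ => pd2_eq_fderiv (h _)

theorem uncurry_pd3 (h : Differentiable ℝ ↿f) : ↿(pd3 f) = fun p => fderiv ℝ ↿f p (0, 0, 1) :=
  funext fun _ => pd3_eq_fderiv (h _)

theorem differentiable_pd1 (hf : ContDiff ℝ 2 ↿f) : Differentiable ℝ ↿(pd1 f) := by
  rw [uncurry_pd1 (hf.differentiable two_ne_zero)]
  exact hf.differentiable_fderiv_apply _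

theorem differentiable_pd2 (hf : ContDiff ℝ 2 ↿f) : Differentiable ℝ ↿(pd2 f) := by
  rw [uncurry_pd2 (hf.differentiable two_ne_zero)]
  exact hf.differentiable_fderiv_apply _

theorem differentiable_pd3 (hf : ContDiff ℝ 2 ↿f) : Differentiable ℝ ↿(pd3 f) := by
  rw [uncurry_pd3 (hf.differentiable two_ne_zero)]
  exact hf.differentiable_fderiv_apply _

theorem pd1_pd2_comm (hf : ContDiff ℝ 2 ↿f) : pd1 (pd2 f) a b c = pd2 (pd1 f) a b c := by
  rw [pd1_eq_fderiv (differentiable_pd2 hf _), pd2_eq_fderiv (differentiable_pd1 hf _),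
    uncurry_pd1 (hf.differentiable two_ne_zero), uncurry_pd2 (hf.differentiable two_ne_zero)]
  exact fderiv_fderiv_apply_comm hf _ _ _

theorem pd1_pd3_comm (hf : ContDiff ℝ 2 ↿f) : pd1 (pd3 f) a b c = pd3 (pd1 f) a b c := by
  rw [pd1_eq_fderiv (differentiable_pd3 hf _), pd3_eq_fderiv (differentiable_pd1 hf _),
    uncurry_pd1 (hf.differentiable two_ne_zero), uncurry_pd3 (hf.differentiable two_ne_zero)]
  exact fderiv_fderiv_apply_comm hf _ _ _

theorem pd2_pd3_comm (hf : ContDiff ℝ 2 ↿f) : pd2 (pd3 f) a b c = pd3 (pd2 f) a b c := by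
  rw [pd2_eq_fderiv (differentiable_pd3 hf _), pd3_eq_fderiv (differentiable_pd2 hf _),
    uncurry_pd2 (hf.differentiable two_ne_zero), uncurry_pd3 (hf.differentiable two_ne_zero)]
  exact fderiv_fderiv_apply_comm hf _ _ _

end Partials

-- An anonymous constructor `⟨0, x, y, z⟩ : ℍ[ℝ]` elaborates at the structure type
-- `QuaternionAlgebra ℝ (-1) 0 (-1)`, on which no topology instance is found.
def vecQ (x y z : ℝ) : ℍ[ℝ] := ⟨0, x, y, z⟩

@[simp] theorem vecQ_re (x y z : ℝ) : (vecQ x y z).re = 0 := rfl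
@[simp] theorem vecQ_imI (x y z : ℝ) : (vecQ x y z).imI = x := rfl
@[simp] theorem vecQ_imJ (x y z : ℝ) : (vecQ x y z).imJ = y := rfl
@[simp] theorem vecQ_imK (x y z : ℝ) : (vecQ x y z).imK = z := rfl

theorem e1_eq_vecQ : e1 = vecQ 1 0 0 := rfl
theorem e2_eq_vecQ : e2 = vecQ 0 1 0 := rfl
theorem e3_eq_vecQ : e3 = vecQ 0 0 1 := rfl

theorem vecQ_eq_smul (x y z : ℝ) : vecQ x y z = x • e1 + y • e2 + z • e3 := by
  ext <;> simp [e1_eq_vecQ, e2_eq_vecQ, e3_eq_vecQ]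

theorem vecQ_mul_add_mul_vecQ (x₁ x₂ x₃ y₁ y₂ y₃ : ℝ) :
    vecQ x₁ x₂ x₃ * vecQ y₁ y₂ y₃ + vecQ y₁ y₂ y₃ * vecQ x₁ x₂ x₃ =
      ((-2 * (x₁ * y₁ + x₂ * y₂ + x₃ * y₃) : ℝ) : ℍ[ℝ]) := by
  ext <;> simp <;> ring

theorem HasDerivAt.vecQ {f₁ f₂ f₃ : ℝ → ℝ} {f₁' f₂' f₃' x : ℝ}
    (h₁ : HasDerivAt f₁ f₁' x) (h₂ : HasDerivAt f₂ f₂' x) (h₃ : HasDerivAt f₃ f₃' x) :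
    HasDerivAt (fun t => vecQ (f₁ t) (f₂ t) (f₃ t)) (vecQ f₁' f₂' f₃') x := by
  simp only [vecQ_eq_smul]
  exact ((h₁.smul_const e1).add (h₂.smul_const e2)).add (h₃.smul_const e3)

noncomputable def grad (f : ℝ → ℝ → ℝ → ℝ) (a b c : ℝ) : ℍ[ℝ] :=
  vecQ (pd1 f a b c) (pd2 f a b c) (pd3 f a b c)

noncomputable def laplacian (f : ℝ → ℝ → ℝ → ℝ) (a b c : ℝ) : ℝ :=
  pd1 (pd1 f) a b c + pd2 (pd2 f) a b c + pd3 (pd3 f) a b c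

section Gradient

variable {w u : ℝ → ℝ → ℝ → ℝ} {a b c : ℝ}

theorem grad_neg (f : ℝ → ℝ → ℝ → ℝ) : grad (fun a b c => -f a b c) = -grad f := by
  funext a b c
  ext <;> simp [grad, pd1, pd2, pd3]

theorem grad_mul_add_mul_grad (f g : ℝ → ℝ → ℝ → ℝ) (a b c : ℝ) :
    grad f a b c * grad g a b c + grad g a b c * grad f a b c =
      ((-2 * (pd1 f a b c * pd1 g a b c + pd2 f a b c * pd2 g a b c
        + pd3 f a b c * pd3 g a b c) : ℝ) : ℍ[ℝ]) :=
  vecQ_mul_add_mul_vecQ _ _ _ _ _ _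

theorem differentiable_grad (hu : ContDiff ℝ 2 ↿u) : Differentiable ℝ ↿(grad u) := by
  have h : ↿(grad u) = fun p => ↿(pd1 u) p • e1 + ↿(pd2 u) p • e2 + ↿(pd3 u) p • e3 :=
    funext fun _ => vecQ_eq_smul _ _ _
  rw [h]
  exact (((differentiable_pd1 hu).smul_const e1).add ((differentiable_pd2 hu).smul_const e2)).add
    ((differentiable_pd3 hu).smul_const e3)

theorem MT_smul {Q : ℝ → ℝ → ℝ → ℍ[ℝ]} (hw : DifferentiableAt ℝ ↿w (a, b, c))
    (hQ : DifferentiableAt ℝ ↿Q (a, b, c)) :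
    MT (fun x y z => w x y z • Q x y z) a b c = grad w a b c * Q a b c + w a b c • MT Q a b c := by
  simp only [MT, grad, pd1, pd2, pd3]
  rw [deriv_fun_smul (hasDerivAt_slice₁ hw).differentiableAt
      (hasDerivAt_slice₁ hQ).differentiableAt,
    deriv_fun_smul (hasDerivAt_slice₂ hw).differentiableAt (hasDerivAt_slice₂ hQ).differentiableAt,
    deriv_fun_smul (hasDerivAt_slice₃ hw).differentiableAt (hasDerivAt_slice₃ hQ).differentiableAt,
    vecQ_eq_smul]
  simp only [mul_add, add_mul, mul_smul_comm, smul_mul_assoc, smul_add]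
  abel

theorem MT_grad (hu : ContDiff ℝ 2 ↿u) (a b c : ℝ) :
    MT (grad u) a b c = ((-laplacian u a b c : ℝ) : ℍ[ℝ]) := by
  have hd₁ := differentiable_pd1 hu (a, b, c)
  have hd₂ := differentiable_pd2 hu (a, b, c)
  have hd₃ := differentiable_pd3 hu (a, b, c)
  simp only [MT, grad]
  rw [((hasDerivAt_pd1 hd₁).vecQ (hasDerivAt_pd1 hd₂) (hasDerivAt_pd1 hd₃)).deriv,
    ((hasDerivAt_pd2 hd₁).vecQ (hasDerivAt_pd2 hd₂) (hasDerivAt_pd2 hd₃)).deriv,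
    ((hasDerivAt_pd3 hd₁).vecQ (hasDerivAt_pd3 hd₂) (hasDerivAt_pd3 hd₃)).deriv,
    pd1_pd2_comm hu, pd1_pd3_comm hu, pd2_pd3_comm hu]
  ext <;> simp [e1_eq_vecQ, e2_eq_vecQ, e3_eq_vecQ, laplacian]
  ring

theorem MT_neg_smul_grad_add_mul (hw : DifferentiableAt ℝ ↿w (a, b, c)) (hw0 : w a b c ≠ 0)
    (hu : ContDiff ℝ 2 ↿u) :
    MT (fun x y z => (-w x y z) • grad u x y z) a b c
        + (-w a b c) • grad u a b c * (w a b c)⁻¹ • grad w a b c =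
      ((2 * (pd1 w a b c * pd1 u a b c + pd2 w a b c * pd2 u a b c
        + pd3 w a b c * pd3 u a b c) + w a b c * laplacian u a b c : ℝ) : ℍ[ℝ]) := by
  rw [MT_smul hw.neg (differentiable_grad hu _), grad_neg, MT_grad hu, smul_mul_smul_comm,
    neg_mul, mul_inv_cancel₀ hw0, neg_one_smul, Quaternion.smul_coe, Pi.neg_apply, Pi.neg_apply,
    Pi.neg_apply, neg_mul, add_right_comm, ← neg_add, grad_mul_add_mul_grad,
    ← Quaternion.coe_neg, ← Quaternion.coe_add, Quaternion.coe_inj]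
  ring

theorem div_sq_mul_grad {σ : ℝ → ℝ → ℝ → ℝ} (hσw : ∀ x y z, w x y z ^ 2 = σ x y z)
    (hw : DifferentiableAt ℝ ↿w (a, b, c)) (hu : ContDiff ℝ 2 ↿u) :
    pd1 (fun x y z => σ x y z * pd1 u x y z) a b c + pd2 (fun x y z => σ x y z * pd2 u x y z) a b c
        + pd3 (fun x y z => σ x y z * pd3 u x y z) a b c =
      w a b c * (2 * (pd1 w a b c * pd1 u a b c + pd2 w a b c * pd2 u a b c
        + pd3 w a b c * pd3 u a b c) + w a b c * laplacian u a b c) := by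
  simp only [← hσw]
  rw [pd1, pd2, pd3,
    (((hasDerivAt_pd1 hw).fun_pow 2).fun_mul (hasDerivAt_pd1 (differentiable_pd1 hu _))).deriv,
    (((hasDerivAt_pd2 hw).fun_pow 2).fun_mul (hasDerivAt_pd2 (differentiable_pd2 hu _))).deriv,
    (((hasDerivAt_pd3 hw).fun_pow 2).fun_mul (hasDerivAt_pd3 (differentiable_pd3 hu _))).deriv]
  simp only [laplacian]
  ring

end Gradient

/-- Quaternionic reformulation of the generalized Ohm's law: with
`E⃗ = −√σ grad u` and `σ⃗ = (grad √σ)/√σ`, one has `div(σ grad u) = 0` iff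
`(D + M^σ⃗) E⃗ = 0`. -/
theorem ohm_law_iff_quaternionic
    (u σ : ℝ → ℝ → ℝ → ℝ)
    (hσ : ∀ x₁ x₂ x₃, 0 < σ x₁ x₂ x₃)
    (hu : ContDiff ℝ 2 (fun x : ℝ × ℝ × ℝ => u x.1 x.2.1 x.2.2))
    (hσs : ContDiff ℝ 2 (fun x : ℝ × ℝ × ℝ => σ x.1 x.2.1 x.2.2))
    (E σv : ℝ → ℝ → ℝ → Quaternion ℝ)
    (hE : E = fun a b c =>
      (⟨0, -(Real.sqrt (σ a b c) * pd1 u a b c),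
          -(Real.sqrt (σ a b c) * pd2 u a b c),
          -(Real.sqrt (σ a b c) * pd3 u a b c)⟩ : Quaternion ℝ))
    (hσv : σv = fun a b c =>
      (⟨0, pd1 (fun x y z => Real.sqrt (σ x y z)) a b c / Real.sqrt (σ a b c),
          pd2 (fun x y z => Real.sqrt (σ x y z)) a b c / Real.sqrt (σ a b c),
          pd3 (fun x y z => Real.sqrt (σ x y z)) a b c / Real.sqrt (σ a b c)⟩ : Quaternion ℝ)) :
    ∀ x₁ x₂ x₃,
      (pd1 (fun a b c => σ a b c * pd1 u a b c) x₁ x₂ x₃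
        + pd2 (fun a b c => σ a b c * pd2 u a b c) x₁ x₂ x₃
        + pd3 (fun a b c => σ a b c * pd3 u a b c) x₁ x₂ x₃ = 0)
      ↔ MT E x₁ x₂ x₃ + E x₁ x₂ x₃ * σv x₁ x₂ x₃ = 0 := by
  intro x₁ x₂ x₃
  set w : ℝ → ℝ → ℝ → ℝ := fun a b c => √(σ a b c)
  have hw : ContDiff ℝ 2 ↿w := hσs.sqrt fun p => (hσ p.1 p.2.1 p.2.2).ne'
  have hw0 : w x₁ x₂ x₃ ≠ 0 := (Real.sqrt_pos.2 (hσ x₁ x₂ x₃)).ne'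
  have hE' : E = fun a b c => (-w a b c) • grad u a b c := by
    rw [hE]; funext a b c; ext <;> simp [grad, w]
  have hσv' : σv = fun a b c => (w a b c)⁻¹ • grad w a b c := by
    rw [hσv]; funext a b c; ext <;> simp [grad, w, div_eq_inv_mul]
  have hwd : DifferentiableAt ℝ ↿w (x₁, x₂, x₃) := hw.differentiable two_ne_zero _
  rw [div_sq_mul_grad (fun a b c => Real.sq_sqrt (hσ a b c).le) hwd hu, hE', hσv',
    MT_neg_smul_grad_add_mul hwd hw0 hu,
    ← Quaternion.coe_zero, Quaternion.coe_inj, mul_eq_zero, or_iff_right hw0]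
end

section
/- With σ₁, σ₂ nonzero real constants and ∂_ζ̄ = ∂/∂x₂ + i∂/∂x₁, the function Z⁽¹⁾(1)(x₁,x₂) = (1/σ₂)e^{−σ₁x₁} sinh(σ₂x₂) + (i/σ₁)e^{−σ₂x₂} sinh(σ₁x₁) is a solution of the Vekua equation ∂_ζ̄ W − (σ₂ − iσ₁)·conj(W) = 0, vanishes at the origin, and satisfies Z⁽¹⁾(1)(x₁,x₂)/(x₂ + ix₁) → 1 as (x₁,x₂) → (0,0). -/
/-!
Write `Z = a + i b` with `a = e^{-σ₁x₁} sinh(σ₂x₂)/σ₂` and `b` the same expression with the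
indices swapped. After differentiating, the imaginary part of the Vekua equation holds
identically, and its real part reduces, through `cosh y - sinh y = e^{-y}`, to
`e^{-σ₁x₁} e^{-σ₂x₂} - e^{-σ₂x₂} e^{-σ₁x₁} = 0`. For the asymptotics, `Z` vanishes at the origin
and its Fréchet derivative there is the `ℝ`-linear isomorphism `(x₁, x₂) ↦ x₂ + i x₁ = ζ`, so the
remainder `Z - ζ` is `o(ζ)`.
-/

/-- `∂_ζ̄ = ∂/∂x₂ + i ∂/∂x₁`, for `ζ = x₂ + i x₁`. -/
noncomputable def dzetabar (F : ℝ → ℝ → ℂ) (x₁ x₂ : ℝ) : ℂ :=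
  deriv (fun t => F x₁ t) x₂ + Complex.I * deriv (fun t => F t x₂) x₁

open Filter Topology Complex

theorem tendsto_div_of_hasFDerivAt_of_eq_zero {E : Type*} [NormedAddCommGroup E]
    [NormedSpace ℝ E] {f : E → ℂ} {L : E ≃L[ℝ] ℂ} {x₀ : E}
    (hf : HasFDerivAt f (L : E →L[ℝ] ℂ) x₀) (h₀ : f x₀ = 0) :
    Tendsto (fun x => f x / L (x - x₀)) (𝓝[≠] x₀) (𝓝 1) := by
  have hrem : (fun x => f x - f x₀ - L (x - x₀)) =o[𝓝 x₀] fun x => L (x - x₀) :=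
    hf.isLittleO.trans_isBigO (L.isBigO_sub_rev _ _)
  rw [← tendsto_sub_nhds_zero_iff]
  refine (hrem.tendsto_div_nhds_zero.mono_left nhdsWithin_le_nhds).congr' ?_
  filter_upwards [self_mem_nhdsWithin] with x hx
  have hL : L (x - x₀) ≠ 0 := by simpa [sub_eq_zero] using hx
  field_simp
  simp [h₀]

noncomputable def expSinh (α β s t : ℝ) : ℝ :=
  1 / β * Real.exp (-α * s) * Real.sinh (β * t)

theorem mul_expSinh (α : ℝ) {β : ℝ} (hβ : β ≠ 0) (s t : ℝ) :
    β * expSinh α β s t = Real.exp (-α * s) * Real.sinh (β * t) := by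
  simp only [expSinh]
  field_simp

theorem hasDerivAt_expSinh_left (α β s t : ℝ) :
    HasDerivAt (fun s => expSinh α β s t) (-α * expSinh α β s t) s := by
  refine ((((hasDerivAt_id s).const_mul (-α)).exp.const_mul (1 / β)).mul_const
    (Real.sinh (β * t))).congr_deriv ?_
  simp only [expSinh, id]
  ring

theorem hasDerivAt_expSinh_right (α : ℝ) {β : ℝ} (hβ : β ≠ 0) (s t : ℝ) :
    HasDerivAt (fun t => expSinh α β s t) (Real.exp (-α * s) * Real.cosh (β * t)) t := by
  refine (((hasDerivAt_id t).const_mul β).sinh.const_mul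
    (1 / β * Real.exp (-α * s))).congr_deriv ?_
  simp only [id]
  field_simp

theorem hasFDerivAt_expSinh_zero {E : Type*} [NormedAddCommGroup E] [NormedSpace ℝ E]
    (α : ℝ) {β : ℝ} (hβ : β ≠ 0) (u v : E →L[ℝ] ℝ) :
    HasFDerivAt (fun x => expSinh α β (u x) (v x)) v 0 := by
  refine ((((u.hasFDerivAt (x := 0)).const_mul (-α)).exp.const_mul (1 / β)).mul
    ((v.hasFDerivAt (x := 0)).const_mul β).sinh).congr_fderiv ?_
  ext x
  simp [hβ]

noncomputable def formalPowerOne (σ₁ σ₂ x₁ x₂ : ℝ) : ℂ :=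
  (expSinh σ₁ σ₂ x₁ x₂ : ℂ) + I * (expSinh σ₂ σ₁ x₂ x₁ : ℂ)

theorem formalPowerOne_zero_zero (σ₁ σ₂ : ℝ) : formalPowerOne σ₁ σ₂ 0 0 = 0 := by
  simp [formalPowerOne, expSinh]

theorem dzetabar_formalPowerOne {σ₁ σ₂ : ℝ} (hσ₁ : σ₁ ≠ 0) (hσ₂ : σ₂ ≠ 0) (x₁ x₂ : ℝ) :
    dzetabar (formalPowerOne σ₁ σ₂) x₁ x₂ =
      (Real.exp (-σ₁ * x₁) * Real.cosh (σ₂ * x₂) : ℝ) + I * (-σ₂ * expSinh σ₂ σ₁ x₂ x₁ : ℝ)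
        + I * ((-σ₁ * expSinh σ₁ σ₂ x₁ x₂ : ℝ)
          + I * (Real.exp (-σ₂ * x₂) * Real.cosh (σ₁ * x₁) : ℝ)) := by
  have h₂ := (hasDerivAt_expSinh_right σ₁ hσ₂ x₁ x₂).ofReal_comp.add
    ((hasDerivAt_expSinh_left σ₂ σ₁ x₂ x₁).ofReal_comp.const_mul I)
  have h₁ := (hasDerivAt_expSinh_left σ₁ σ₂ x₁ x₂).ofReal_comp.add
    ((hasDerivAt_expSinh_right σ₂ hσ₁ x₂ x₁).ofReal_comp.const_mul I)
  exact congrArg₂ (· + I * ·) h₂.deriv h₁.deriv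

theorem vekua_formalPowerOne {σ₁ σ₂ : ℝ} (hσ₁ : σ₁ ≠ 0) (hσ₂ : σ₂ ≠ 0) (x₁ x₂ : ℝ) :
    dzetabar (formalPowerOne σ₁ σ₂) x₁ x₂
      - ((σ₂ : ℂ) - I * (σ₁ : ℂ)) * (starRingEnd ℂ) (formalPowerOne σ₁ σ₂ x₁ x₂) = 0 := by
  have hcosh (α β s t : ℝ) : Real.exp (-α * s) * Real.cosh (β * t)
      = Real.exp (-α * s) * Real.sinh (β * t) + Real.exp (-α * s - β * t) := by
    rw [sub_eq_add_neg, Real.exp_add, ← Real.cosh_sub_sinh]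
    ring
  rw [dzetabar_formalPowerOne hσ₁ hσ₂, formalPowerOne, hcosh σ₁ σ₂ x₁ x₂, hcosh σ₂ σ₁ x₂ x₁,
    ← mul_expSinh σ₁ hσ₂, ← mul_expSinh σ₂ hσ₁]
  apply Complex.ext <;> simp <;> ring_nf

noncomputable def zetaEquiv : (ℝ × ℝ) ≃L[ℝ] ℂ :=
  (ContinuousLinearEquiv.prodComm ℝ ℝ ℝ).trans equivRealProdCLM.symm

@[simp]
theorem zetaEquiv_apply (q : ℝ × ℝ) : zetaEquiv q = q.2 + I * q.1 := by
  simp [zetaEquiv, equivRealProdCLM_symm_apply, mul_comm]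

theorem hasFDerivAt_formalPowerOne_zero {σ₁ σ₂ : ℝ} (hσ₁ : σ₁ ≠ 0) (hσ₂ : σ₂ ≠ 0) :
    HasFDerivAt (fun q : ℝ × ℝ => formalPowerOne σ₁ σ₂ q.1 q.2)
      (zetaEquiv : (ℝ × ℝ) →L[ℝ] ℂ) 0 := by
  refine ((ofRealCLM.hasFDerivAt.comp 0
    (hasFDerivAt_expSinh_zero σ₁ hσ₂ (.fst ℝ ℝ ℝ) (.snd ℝ ℝ ℝ))).add
    ((ofRealCLM.hasFDerivAt.comp 0
      (hasFDerivAt_expSinh_zero σ₂ hσ₁ (.snd ℝ ℝ ℝ) (.fst ℝ ℝ ℝ))).const_mul I)).congr_fderiv ?_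
  ext <;> simp

/-- The first formal power `Z⁽¹⁾(1)` solves the Vekua equation
`∂_ζ̄ W − (σ₂ − iσ₁) conj W = 0`, vanishes at the origin, and satisfies
`Z⁽¹⁾(1)(x₁,x₂)/(x₂ + ix₁) → 1` as `(x₁,x₂) → (0,0)`. -/
theorem formal_power_degree_one_coefficient_one
    (σ₁ σ₂ : ℝ) (hσ₁ : σ₁ ≠ 0) (hσ₂ : σ₂ ≠ 0)
    (Z : ℝ → ℝ → ℂ)
    (hZ : Z = fun x₁ x₂ =>
      ((1 / σ₂ * Real.exp (-σ₁ * x₁) * Real.sinh (σ₂ * x₂) : ℝ) : ℂ)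
        + Complex.I * ((1 / σ₁ * Real.exp (-σ₂ * x₂) * Real.sinh (σ₁ * x₁) : ℝ) : ℂ)) :
    (∀ x₁ x₂, dzetabar Z x₁ x₂
        - ((σ₂ : ℂ) - Complex.I * (σ₁ : ℂ)) * (starRingEnd ℂ) (Z x₁ x₂) = 0) ∧
    Z 0 0 = 0 ∧
    Filter.Tendsto (fun q : ℝ × ℝ => Z q.1 q.2 / ((q.2 : ℂ) + Complex.I * (q.1 : ℂ)))
      (nhdsWithin ((0, 0) : ℝ × ℝ) {((0, 0) : ℝ × ℝ)}ᶜ) (nhds 1) := by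
  obtain rfl : Z = formalPowerOne σ₁ σ₂ := hZ
  refine ⟨vekua_formalPowerOne hσ₁ hσ₂, formalPowerOne_zero_zero σ₁ σ₂, ?_⟩
  simpa [Prod.mk_zero_zero] using tendsto_div_of_hasFDerivAt_of_eq_zero
    (hasFDerivAt_formalPowerOne_zero hσ₁ hσ₂) (formalPowerOne_zero_zero σ₁ σ₂)
end

section
/- Let σ₁, σ₂, σ₃ be nonzero real constants and σ = exp(2σ₁x₁ + 2σ₂x₂ + 2σ₃x₃). Then the function u(x₁,x₂) = (1/(4σ₁σ₂))(e^{−2σ₁x₁} + e^{−2σ₂x₂} − e^{−2σ₁x₁−2σ₂x₂}) satisfies div(σ grad u) = 0 on ℝ³, and −σ·grad u = ((1/σ₂)e^{σ₂x₂+2σ₃x₃} sinh(σ₂x₂), (1/σ₁)e^{σ₁x₁+2σ₃x₃} sinh(σ₁x₁), 0). -/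
open Real

theorem pd1_eq_zero_of_forall_eq {f : ℝ → ℝ → ℝ → ℝ} {g : ℝ → ℝ → ℝ}
    (h : ∀ a b c, f a b c = g b c) (x₁ x₂ x₃ : ℝ) : pd1 f x₁ x₂ x₃ = 0 := by
  simp only [pd1, h, deriv_const]

theorem pd2_eq_zero_of_forall_eq {f : ℝ → ℝ → ℝ → ℝ} {g : ℝ → ℝ → ℝ}
    (h : ∀ a b c, f a b c = g a c) (x₁ x₂ x₃ : ℝ) : pd2 f x₁ x₂ x₃ = 0 := by
  simp only [pd2, h, deriv_const]

theorem pd3_eq_zero_of_forall_eq {f : ℝ → ℝ → ℝ → ℝ} {g : ℝ → ℝ → ℝ}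
    (h : ∀ a b c, f a b c = g a b) (x₁ x₂ x₃ : ℝ) : pd3 f x₁ x₂ x₃ = 0 := by
  simp only [pd3, h, deriv_const]

theorem exp_add_mul_sinh (x y : ℝ) : exp (x + y) * sinh x = (exp (2 * x + y) - exp y) / 2 := by
  rw [sinh_eq, mul_div_assoc', mul_sub, ← exp_add, ← exp_add]
  ring_nf

noncomputable def potential (σ₁ σ₂ : ℝ) (x₁ x₂ _ : ℝ) : ℝ :=
  1 / (4 * σ₁ * σ₂) *
    (exp (-2 * σ₁ * x₁) + exp (-2 * σ₂ * x₂) - exp (-2 * σ₁ * x₁ - 2 * σ₂ * x₂))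

theorem potential_swap (σ₁ σ₂ a b c : ℝ) : potential σ₁ σ₂ a b c = potential σ₂ σ₁ b a c := by
  simp only [potential]
  ring_nf

theorem pd1_potential {σ₁ : ℝ} (σ₂ : ℝ) (hσ₁ : σ₁ ≠ 0) (a b c : ℝ) :
    pd1 (potential σ₁ σ₂) a b c
      = 1 / (2 * σ₂) * (exp (-2 * σ₁ * a - 2 * σ₂ * b) - exp (-2 * σ₁ * a)) := by
  have hlin : HasDerivAt (fun t => -2 * σ₁ * t) (-2 * σ₁) a := by
    simpa using (hasDerivAt_id a).const_mul (-2 * σ₁)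
  have hu : HasDerivAt (fun t => potential σ₁ σ₂ t b c)
      (1 / (4 * σ₁ * σ₂) * (exp (-2 * σ₁ * a) * (-2 * σ₁)
        - exp (-2 * σ₁ * a - 2 * σ₂ * b) * (-2 * σ₁))) a :=
    ((hlin.exp.add_const _).sub (hlin.sub_const (2 * σ₂ * b)).exp).const_mul _
  rw [pd1, hu.deriv]
  field_simp
  ring

theorem pd2_potential (σ₁ σ₂ a b c : ℝ) :
    pd2 (potential σ₁ σ₂) a b c = pd1 (potential σ₂ σ₁) b a c := by
  simp only [pd1, pd2, potential_swap σ₁ σ₂]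

theorem pd3_potential (σ₁ σ₂ a b c : ℝ) : pd3 (potential σ₁ σ₂) a b c = 0 :=
  pd3_eq_zero_of_forall_eq (fun _ _ _ => rfl) a b c

theorem exp_mul_pd1_potential {σ₁ : ℝ} (σ₂ σ₃ : ℝ) (hσ₁ : σ₁ ≠ 0) (a b c : ℝ) :
    -(exp (2 * σ₁ * a + 2 * σ₂ * b + 2 * σ₃ * c) * pd1 (potential σ₁ σ₂) a b c)
      = 1 / σ₂ * exp (σ₂ * b + 2 * σ₃ * c) * sinh (σ₂ * b) := by
  have hA : exp (2 * σ₁ * a + 2 * σ₂ * b + 2 * σ₃ * c) * exp (-2 * σ₁ * a - 2 * σ₂ * b)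
      = exp (2 * σ₃ * c) := by
    rw [← exp_add]; ring_nf
  have hB : exp (2 * σ₁ * a + 2 * σ₂ * b + 2 * σ₃ * c) * exp (-2 * σ₁ * a)
      = exp (2 * (σ₂ * b) + 2 * σ₃ * c) := by
    rw [← exp_add]; ring_nf
  rw [pd1_potential σ₂ hσ₁, mul_assoc (1 / σ₂), exp_add_mul_sinh]
  linear_combination (-(1 / (2 * σ₂))) * hA + 1 / (2 * σ₂) * hB

theorem exp_mul_pd2_potential (σ₁ : ℝ) {σ₂ : ℝ} (σ₃ : ℝ) (hσ₂ : σ₂ ≠ 0) (a b c : ℝ) :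
    -(exp (2 * σ₁ * a + 2 * σ₂ * b + 2 * σ₃ * c) * pd2 (potential σ₁ σ₂) a b c)
      = 1 / σ₁ * exp (σ₁ * a + 2 * σ₃ * c) * sinh (σ₁ * a) := by
  rw [pd2_potential, add_comm (2 * σ₁ * a)]
  exact exp_mul_pd1_potential σ₁ σ₃ hσ₂ b a c

theorem potential_degree_one_coefficient_one_general
    (σ₁ σ₂ σ₃ : ℝ) (hσ₁ : σ₁ ≠ 0) (hσ₂ : σ₂ ≠ 0)
    (σ u : ℝ → ℝ → ℝ → ℝ)
    (hσ : σ = fun x₁ x₂ x₃ => Real.exp (2 * σ₁ * x₁ + 2 * σ₂ * x₂ + 2 * σ₃ * x₃))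
    (hu : u = fun x₁ x₂ _ => 1 / (4 * σ₁ * σ₂) *
      (Real.exp (-2 * σ₁ * x₁) + Real.exp (-2 * σ₂ * x₂)
        - Real.exp (-2 * σ₁ * x₁ - 2 * σ₂ * x₂))) :
    ∀ x₁ x₂ x₃,
      pd1 (fun a b c => σ a b c * pd1 u a b c) x₁ x₂ x₃
        + pd2 (fun a b c => σ a b c * pd2 u a b c) x₁ x₂ x₃
        + pd3 (fun a b c => σ a b c * pd3 u a b c) x₁ x₂ x₃ = 0 ∧
      -(σ x₁ x₂ x₃ * pd1 u x₁ x₂ x₃)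
        = 1 / σ₂ * Real.exp (σ₂ * x₂ + 2 * σ₃ * x₃) * Real.sinh (σ₂ * x₂) ∧
      -(σ x₁ x₂ x₃ * pd2 u x₁ x₂ x₃)
        = 1 / σ₁ * Real.exp (σ₁ * x₁ + 2 * σ₃ * x₃) * Real.sinh (σ₁ * x₁) ∧
      -(σ x₁ x₂ x₃ * pd3 u x₁ x₂ x₃) = 0 := by
  obtain rfl : u = potential σ₁ σ₂ := hu
  subst hσ
  beta_reduce
  have hJ₁ := exp_mul_pd1_potential σ₂ σ₃ hσ₁
  have hJ₂ := exp_mul_pd2_potential σ₁ σ₃ hσ₂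
  intro x₁ x₂ x₃
  have hdiv₁ := pd1_eq_zero_of_forall_eq
    (g := fun b c => -(1 / σ₂ * exp (σ₂ * b + 2 * σ₃ * c) * sinh (σ₂ * b)))
    (fun a b c => neg_eq_iff_eq_neg.mp (hJ₁ a b c)) x₁ x₂ x₃
  have hdiv₂ := pd2_eq_zero_of_forall_eq
    (g := fun a c => -(1 / σ₁ * exp (σ₁ * a + 2 * σ₃ * c) * sinh (σ₁ * a)))
    (fun a b c => neg_eq_iff_eq_neg.mp (hJ₂ a b c)) x₁ x₂ x₃
  refine ⟨?_, hJ₁ x₁ x₂ x₃, hJ₂ x₁ x₂ x₃, by rw [pd3_potential, mul_zero, neg_zero]⟩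
  simp only [pd3_potential, mul_zero]
  rw [hdiv₁, hdiv₂, pd3, deriv_const, add_zero, add_zero]

/-- The potential `u⁽¹⁾(1,0)` solves `div(σ grad u) = 0` for
`σ = e^{2σ₁x₁+2σ₂x₂+2σ₃x₃}`, and its current density `−σ grad u` is
`((1/σ₂)e^{σ₂x₂+2σ₃x₃} sinh(σ₂x₂), (1/σ₁)e^{σ₁x₁+2σ₃x₃} sinh(σ₁x₁), 0)`. -/
theorem potential_degree_one_coefficient_one
    (σ₁ σ₂ σ₃ : ℝ) (hσ₁ : σ₁ ≠ 0) (hσ₂ : σ₂ ≠ 0) (hσ₃ : σ₃ ≠ 0)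
    (σ u : ℝ → ℝ → ℝ → ℝ)
    (hσ : σ = fun x₁ x₂ x₃ => Real.exp (2 * σ₁ * x₁ + 2 * σ₂ * x₂ + 2 * σ₃ * x₃))
    (hu : u = fun x₁ x₂ _ => 1 / (4 * σ₁ * σ₂) *
      (Real.exp (-2 * σ₁ * x₁) + Real.exp (-2 * σ₂ * x₂)
        - Real.exp (-2 * σ₁ * x₁ - 2 * σ₂ * x₂))) :
    ∀ x₁ x₂ x₃,
      pd1 (fun a b c => σ a b c * pd1 u a b c) x₁ x₂ x₃
        + pd2 (fun a b c => σ a b c * pd2 u a b c) x₁ x₂ x₃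
        + pd3 (fun a b c => σ a b c * pd3 u a b c) x₁ x₂ x₃ = 0 ∧
      -(σ x₁ x₂ x₃ * pd1 u x₁ x₂ x₃)
        = 1 / σ₂ * Real.exp (σ₂ * x₂ + 2 * σ₃ * x₃) * Real.sinh (σ₂ * x₂) ∧
      -(σ x₁ x₂ x₃ * pd2 u x₁ x₂ x₃)
        = 1 / σ₁ * Real.exp (σ₁ * x₁ + 2 * σ₃ * x₃) * Real.sinh (σ₁ * x₁) ∧
      -(σ x₁ x₂ x₃ * pd3 u x₁ x₂ x₃) = 0 :=
  potential_degree_one_coefficient_one_general σ₁ σ₂ σ₃ hσ₁ hσ₂ σ u hσ hu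
end

section
/- Let σ₁, σ₂, σ₃ be nonzero real constants and σ = exp(2σ₁x₁ + 2σ₂x₂ + 2σ₃x₃). Then u(x₁,x₂) = x₁/(2σ₁) − x₂/(2σ₂) + (1/(4σ₁²))e^{−2σ₁x₁} − (1/(4σ₂²))e^{−2σ₂x₂} satisfies div(σ grad u) = 0 on ℝ³, and −σ·grad u = (−(1/σ₁)e^{σ₁x₁+2σ₂x₂+2σ₃x₃} sinh(σ₁x₁), (1/σ₂)e^{2σ₁x₁+σ₂x₂+2σ₃x₃} sinh(σ₂x₂), 0). -/
/-!
The potential separates as `u = p σ₁ x₁ - p σ₂ x₂` for `p = potentialProfile`,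
whose derivative `(1 - e^{-2ct}) / (2c)` is chosen so that multiplying by the conductivity
`e^{2ct + d}` leaves `(e^{2ct + d} - e^d) / (2c) = e^{ct + d} sinh (ct) / c`. The `x₁`- and
`x₂`-currents therefore have derivatives `e^{2σ₁x₁ + 2σ₂x₂ + 2σ₃x₃}` and its negative, which
cancel in the divergence.
-/

open Real

noncomputable def potentialProfile (c t : ℝ) : ℝ :=
  t / (2 * c) + 1 / (4 * c ^ 2) * exp (-2 * c * t)

section

variable {c : ℝ}

lemma hasDerivAt_potentialProfile (hc : c ≠ 0) (t : ℝ) :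
    HasDerivAt (potentialProfile c) ((1 - exp (-2 * c * t)) / (2 * c)) t := by
  have h := ((hasDerivAt_id' t).div_const (2 * c)).add
    (((hasDerivAt_id' t).const_mul (-2 * c)).exp.const_mul (1 / (4 * c ^ 2)))
  refine h.congr_deriv ?_
  field_simp
  ring

lemma exp_mul_deriv_potentialProfile (c d t : ℝ) :
    exp (2 * c * t + d) * ((1 - exp (-2 * c * t)) / (2 * c))
      = (exp (2 * c * t + d) - exp d) / (2 * c) := by
  rw [mul_div_assoc', mul_one_sub, ← exp_add]
  ring_nf

lemma hasDerivAt_exp_sub_exp_div (hc : c ≠ 0) (d t : ℝ) :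
    HasDerivAt (fun t => (exp (2 * c * t + d) - exp d) / (2 * c)) (exp (2 * c * t + d)) t := by
  have h := ((((hasDerivAt_id' t).const_mul (2 * c)).add_const d).exp.sub_const (exp d)).div_const
    (2 * c)
  refine h.congr_deriv ?_
  field_simp

lemma exp_sub_exp_div_eq_sinh (hc : c ≠ 0) (d t : ℝ) :
    (exp (2 * c * t + d) - exp d) / (2 * c) = 1 / c * exp (c * t + d) * sinh (c * t) := by
  have h₁ : exp (c * t + d) * exp (c * t) = exp (2 * c * t + d) := by rw [← exp_add]; ring_nf
  have h₂ : exp (c * t + d) * exp (-(c * t)) = exp d := by rw [← exp_add]; ring_nf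
  rw [sinh_eq]
  field_simp
  linear_combination h₂ - h₁

end

theorem potential_degree_one_coefficient_i_general
    (σ₁ σ₂ σ₃ : ℝ) (hσ₁ : σ₁ ≠ 0) (hσ₂ : σ₂ ≠ 0)
    (σ u : ℝ → ℝ → ℝ → ℝ)
    (hσ : σ = fun x₁ x₂ x₃ => Real.exp (2 * σ₁ * x₁ + 2 * σ₂ * x₂ + 2 * σ₃ * x₃))
    (hu : u = fun x₁ x₂ _ => x₁ / (2 * σ₁) - x₂ / (2 * σ₂)
      + 1 / (4 * σ₁ ^ 2) * Real.exp (-2 * σ₁ * x₁)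
      - 1 / (4 * σ₂ ^ 2) * Real.exp (-2 * σ₂ * x₂)) :
    ∀ x₁ x₂ x₃,
      pd1 (fun a b c => σ a b c * pd1 u a b c) x₁ x₂ x₃
        + pd2 (fun a b c => σ a b c * pd2 u a b c) x₁ x₂ x₃
        + pd3 (fun a b c => σ a b c * pd3 u a b c) x₁ x₂ x₃ = 0 ∧
      -(σ x₁ x₂ x₃ * pd1 u x₁ x₂ x₃)
        = -(1 / σ₁) * Real.exp (σ₁ * x₁ + 2 * σ₂ * x₂ + 2 * σ₃ * x₃) * Real.sinh (σ₁ * x₁) ∧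
      -(σ x₁ x₂ x₃ * pd2 u x₁ x₂ x₃)
        = 1 / σ₂ * Real.exp (2 * σ₁ * x₁ + σ₂ * x₂ + 2 * σ₃ * x₃) * Real.sinh (σ₂ * x₂) ∧
      -(σ x₁ x₂ x₃ * pd3 u x₁ x₂ x₃) = 0 := by
  intro x₁ x₂ x₃
  replace hu : u = fun a b _ => potentialProfile σ₁ a - potentialProfile σ₂ b := by
    rw [hu]; funext a b _; simp only [potentialProfile]; ring
  have pd3_u : ∀ a b c, pd3 u a b c = 0 := by simp [pd3, hu]
  have current₁ : ∀ a b c, σ a b c * pd1 u a b c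
      = (exp (2 * σ₁ * a + (2 * σ₂ * b + 2 * σ₃ * c)) - exp (2 * σ₂ * b + 2 * σ₃ * c))
          / (2 * σ₁) := by
    intro a b c
    rw [pd1, hu, ((hasDerivAt_potentialProfile hσ₁ a).sub_const _).deriv, hσ,
      ← exp_mul_deriv_potentialProfile]
    ring_nf
  have current₂ : ∀ a b c, σ a b c * pd2 u a b c
      = -((exp (2 * σ₂ * b + (2 * σ₁ * a + 2 * σ₃ * c)) - exp (2 * σ₁ * a + 2 * σ₃ * c))
          / (2 * σ₂)) := by
    intro a b c
    rw [pd2, hu, ((hasDerivAt_potentialProfile hσ₂ b).const_sub _).deriv, hσ,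
      ← exp_mul_deriv_potentialProfile]
    ring_nf
  refine ⟨?_, ?_, ?_, ?_⟩
  · simp only [current₁, current₂, pd3_u, mul_zero]
    simp only [pd1, pd2, pd3, deriv_const]
    rw [(hasDerivAt_exp_sub_exp_div hσ₁ _ x₁).deriv, deriv.fun_neg,
      (hasDerivAt_exp_sub_exp_div hσ₂ _ x₂).deriv]
    ring_nf
  · rw [current₁, exp_sub_exp_div_eq_sinh hσ₁]
    ring_nf
  · rw [current₂, exp_sub_exp_div_eq_sinh hσ₂]
    ring_nf
  · rw [pd3_u, mul_zero, neg_zero]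

/-- The potential `u⁽¹⁾(i,0)` solves `div(σ grad u) = 0` for
`σ = e^{2σ₁x₁+2σ₂x₂+2σ₃x₃}`, and its current density `−σ grad u` is
`(−(1/σ₁)e^{σ₁x₁+2σ₂x₂+2σ₃x₃} sinh(σ₁x₁), (1/σ₂)e^{2σ₁x₁+σ₂x₂+2σ₃x₃} sinh(σ₂x₂), 0)`. -/
theorem potential_degree_one_coefficient_i
    (σ₁ σ₂ σ₃ : ℝ) (hσ₁ : σ₁ ≠ 0) (hσ₂ : σ₂ ≠ 0) (hσ₃ : σ₃ ≠ 0)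
    (σ u : ℝ → ℝ → ℝ → ℝ)
    (hσ : σ = fun x₁ x₂ x₃ => Real.exp (2 * σ₁ * x₁ + 2 * σ₂ * x₂ + 2 * σ₃ * x₃))
    (hu : u = fun x₁ x₂ _ => x₁ / (2 * σ₁) - x₂ / (2 * σ₂)
      + 1 / (4 * σ₁ ^ 2) * Real.exp (-2 * σ₁ * x₁)
      - 1 / (4 * σ₂ ^ 2) * Real.exp (-2 * σ₂ * x₂)) :
    ∀ x₁ x₂ x₃,
      pd1 (fun a b c => σ a b c * pd1 u a b c) x₁ x₂ x₃
        + pd2 (fun a b c => σ a b c * pd2 u a b c) x₁ x₂ x₃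
        + pd3 (fun a b c => σ a b c * pd3 u a b c) x₁ x₂ x₃ = 0 ∧
      -(σ x₁ x₂ x₃ * pd1 u x₁ x₂ x₃)
        = -(1 / σ₁) * Real.exp (σ₁ * x₁ + 2 * σ₂ * x₂ + 2 * σ₃ * x₃) * Real.sinh (σ₁ * x₁) ∧
      -(σ x₁ x₂ x₃ * pd2 u x₁ x₂ x₃)
        = 1 / σ₂ * Real.exp (2 * σ₁ * x₁ + σ₂ * x₂ + 2 * σ₃ * x₃) * Real.sinh (σ₂ * x₂) ∧
      -(σ x₁ x₂ x₃ * pd3 u x₁ x₂ x₃) = 0 :=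
  potential_degree_one_coefficient_i_general σ₁ σ₂ σ₃ hσ₁ hσ₂ σ u hσ hu
end
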